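/- There is an indexed family 𝓜𝓢𝓓 = {F_n}_{n∈ℕ} (the marked self-describing sets), in which each F_n is a descriptor on the 0th column describing n, that is PRT[T]-learnable but not PRT[O]-learnable. -/

import Mathlib

/-!
Common framework: indexed families of c.e. sets, enumerations (texts),
learning machines with run-time, membership-oracle machines, teachers,
and the learning criteria PRT/PSD/PMC/PCS with oracle/teacher variants.
-/

namespace TeachLearn

attribute [local instance] Classical.propDecidable

/-- The initial segment (finite string) of length `n` of the infinite sequence `f`. -/
def str (f : ℕ → ℕ) (n : ℕ) : List ℕ := (List.range n).map f

/-- `f` is an enumeration (a text) of the set `A`: its set of values is exactly `A`. -/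
def IsEnum (f : ℕ → ℕ) (A : Set ℕ) : Prop := Set.range f = A

/-- An indexed family: a uniformly computably enumerable sequence of nonempty
subsets of `ℕ`. -/
structure IndexedFamily where
  F : ℕ → Set ℕ
  nonempty : ∀ n, (F n).Nonempty
  uce : REPred fun p : ℕ × ℕ => p.1 ∈ F p.2

namespace IndexedFamily

/-- `A` is a member of the indexed family `𝓕`. -/
def Mem (𝓕 : IndexedFamily) (A : Set ℕ) : Prop := ∃ n, 𝓕.F n = A

/-- The minimal index of `A` in the indexed family `𝓕`. -/
noncomputable def mi (𝓕 : IndexedFamily) (A : Set ℕ) : ℕ := sInf {n | 𝓕.F n = A}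

end IndexedFamily

/-- A learning machine: a partial computable map from finite strings to
hypotheses, together with a (cumulative) run-time function.  The run-time is
defined exactly when the machine halts, dominates the length of the input read
as well as the size of the output produced, and is monotone along prefixes
(time is accumulated while reading an enumeration). -/
structure Machine where
  eval : List ℕ →. ℕ
  partrec : Partrec eval
  time : List ℕ →. ℕ
  time_dom : ∀ σ, (time σ).Dom ↔ (eval σ).Dom
  length_le_time : ∀ ⦃σ t⦄, t ∈ time σ → σ.length ≤ t
  size_le_time : ∀ ⦃σ t h⦄, t ∈ time σ → h ∈ eval σ → Nat.size h ≤ t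
  time_mono : ∀ ⦃σ τ s t⦄, σ <+: τ → s ∈ time σ → t ∈ time τ → s ≤ t

/-- A teacher: a computable, prefix-monotone map on finite strings whose
output consists of elements of its input. -/
structure Teacher where
  t : List ℕ → List ℕ
  computable : Computable t
  mono : ∀ ⦃σ τ⦄, σ <+: τ → t σ <+: t τ
  content_sub : ∀ ⦃σ x⦄, x ∈ t σ → x ∈ σ

/-- A learning machine with access to a membership oracle, modeled
interactively: `step (σ, ans)` is the machine's action on input string `σ`
after having received the list `ans` of oracle answers so far; an even value
`2 * q` asks the oracle whether `q` belongs to the target, while an odd value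
`2 * h + 1` halts the interaction with hypothesis `h`.  The run-time dominates
the length of the input read, the number of oracle queries asked, and the size
of the value produced, and is monotone (cumulative). -/
structure OMachine where
  step : List ℕ × List Bool →. ℕ
  partrec : Partrec step
  time : List ℕ × List Bool →. ℕ
  time_dom : ∀ x, (time x).Dom ↔ (step x).Dom
  length_le_time : ∀ ⦃x t⦄, t ∈ time x → x.1.length ≤ t
  queries_le_time : ∀ ⦃x t⦄, t ∈ time x → x.2.length ≤ t
  size_le_time : ∀ ⦃x t v⦄, t ∈ time x → v ∈ step x → Nat.size v ≤ t
  time_mono : ∀ ⦃σ τ a b s t⦄, σ <+: τ → a <+: b →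
    s ∈ time (σ, a) → t ∈ time (τ, b) → s ≤ t

namespace OMachine

/-- The answer lists reachable in the interaction of the machine `M` with the
membership oracle for `A` on the input string `σ`. -/
inductive Reach (M : OMachine) (A : Set ℕ) (σ : List ℕ) : List Bool → Prop
  | nil : Reach M A σ []
  | query {ans q} : Reach M A σ ans → (2 * q) ∈ M.step (σ, ans) →
      Reach M A σ (ans ++ [decide (q ∈ A)])

/-- `M.Out A σ h ans`: on input `σ`, interacting with the membership oracle
for `A`, the machine `M` receives the oracle answers `ans` and halts with
hypothesis `h`. -/
def Out (M : OMachine) (A : Set ℕ) (σ : List ℕ) (h : ℕ) (ans : List Bool) : Prop :=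
  M.Reach A σ ans ∧ (2 * h + 1) ∈ M.step (σ, ans)

/-- With oracle `A`, on the stage inputs `I`, the machine `M` outputs the
hypothesis `h` from stage `n` onwards. -/
def Settles (M : OMachine) (A : Set ℕ) (I : ℕ → List ℕ) (h n : ℕ) : Prop :=
  ∀ m, n ≤ m → ∃ ans, M.Out A (I m) h ans

end OMachine

/-- A teacher for the teacher-and-oracle model: it additionally has access to
the oracle answers received so far by the learner. -/
structure OTeacher where
  t : List ℕ → List Bool → List ℕ
  computable : Computable₂ t
  mono : ∀ ⦃σ τ a b⦄, σ <+: τ → a <+: b → t σ a <+: t τ b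
  content_sub : ∀ ⦃σ a x⦄, x ∈ t σ a → x ∈ σ

/-- On the stage inputs `I`, the machine `M` outputs the hypothesis `h` from
stage `n` onwards. -/
def Machine.Settles (M : Machine) (I : ℕ → List ℕ) (h n : ℕ) : Prop :=
  ∀ m, n ≤ m → M.eval (I m) = Part.some h

/-- Settling for the teacher-and-oracle model: `hist m` records the oracle
answers the learner received at stage `m - 1`, which the teacher sees at
stage `m`.  From stage `n` on, the learner outputs `h`. -/
def OMachine.TOSettles (M : OMachine) (T : OTeacher) (A : Set ℕ) (f : ℕ → ℕ)
    (hist : ℕ → List Bool) (h n : ℕ) : Prop :=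
  ∀ m, n ≤ m → M.Out A (T.t (str f m) (hist m)) h (hist (m + 1))

/-! ### Polynomial run-time (PRT) -/

/-- `M` converges to the hypothesis `h` on the stage inputs `I` within fewer
than `B` computation steps. -/
def Machine.PRTIdentifies (M : Machine) (I : ℕ → List ℕ) (h B : ℕ) : Prop :=
  ∃ n, M.Settles I h n ∧ ∃ t, t ∈ M.time (I n) ∧ t < B

/-- Oracle version of `Machine.PRTIdentifies`; the run-time bound also bounds
the oracle use (by `queries_le_time`). -/
def OMachine.PRTIdentifies (M : OMachine) (A : Set ℕ) (I : ℕ → List ℕ) (h B : ℕ) : Prop :=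
  ∃ n, M.Settles A I h n ∧
    ∃ ans t, M.Out A (I n) h ans ∧ t ∈ M.time (I n, ans) ∧ t < B

/-- `M` PRT-learns `𝓕` with polynomial bound `p`. -/
def PRTLearnsWith (M : Machine) (p : Polynomial ℕ) (𝓕 : IndexedFamily) : Prop :=
  ∀ A, 𝓕.Mem A → ∀ f, IsEnum f A →
    ∃ h, 𝓕.F h = A ∧ M.PRTIdentifies (str f) h (p.eval (𝓕.mi A))

/-- `𝓕` is PRT-learnable. -/
def PRT (𝓕 : IndexedFamily) : Prop := ∃ M p, PRTLearnsWith M p 𝓕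

/-- The learner-teacher pair `(M, T)` PRT-learns `𝓕` with polynomial bound `p`. -/
def PRTTLearnsWith (M : Machine) (T : Teacher) (p : Polynomial ℕ) (𝓕 : IndexedFamily) : Prop :=
  ∀ A, 𝓕.Mem A → ∀ f, IsEnum f A →
    ∃ h, 𝓕.F h = A ∧ M.PRTIdentifies (fun m => T.t (str f m)) h (p.eval (𝓕.mi A))

/-- `𝓕` is PRT[T]-learnable. -/
def PRTT (𝓕 : IndexedFamily) : Prop := ∃ M T p, PRTTLearnsWith M T p 𝓕

/-- `𝓕` is PRT[O]-learnable. -/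
def PRTO (𝓕 : IndexedFamily) : Prop :=
  ∃ (M : OMachine) (p : Polynomial ℕ), ∀ A, 𝓕.Mem A → ∀ f, IsEnum f A →
    ∃ h, 𝓕.F h = A ∧ M.PRTIdentifies A (str f) h (p.eval (𝓕.mi A))

/-- `𝓕` is PRT[T,O]-learnable. -/
def PRTTO (𝓕 : IndexedFamily) : Prop :=
  ∃ (M : OMachine) (T : OTeacher) (p : Polynomial ℕ),
    ∀ A, 𝓕.Mem A → ∀ f, IsEnum f A →
      ∃ h, 𝓕.F h = A ∧ ∃ hist : ℕ → List Bool, hist 0 = [] ∧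
        ∃ n, M.TOSettles T A f hist h n ∧
          ∃ t, t ∈ M.time (T.t (str f n) (hist n), hist (n + 1)) ∧ t < p.eval (𝓕.mi A)

/-! ### Polynomial size dataset (PSD) -/

/-- `M` converges to `h` on an initial stage whose input contains fewer than
`B` distinct elements. -/
def Machine.PSDIdentifies (M : Machine) (I : ℕ → List ℕ) (h B : ℕ) : Prop :=
  ∃ n, M.Settles I h n ∧ (I n).toFinset.card < B

/-- Oracle version of `Machine.PSDIdentifies`; the oracle use is also bounded. -/
def OMachine.PSDIdentifies (M : OMachine) (A : Set ℕ) (I : ℕ → List ℕ) (h B : ℕ) : Prop :=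
  ∃ n, M.Settles A I h n ∧ (I n).toFinset.card < B ∧
    ∃ ans, M.Out A (I n) h ans ∧ ans.length ≤ B

/-- `𝓕` is PSD-learnable. -/
def PSD (𝓕 : IndexedFamily) : Prop :=
  ∃ (M : Machine) (p : Polynomial ℕ), ∀ A, 𝓕.Mem A → ∀ f, IsEnum f A →
    ∃ h, 𝓕.F h = A ∧ M.PSDIdentifies (str f) h (p.eval (𝓕.mi A))

/-- `𝓕` is PSD[T]-learnable. -/
def PSDT (𝓕 : IndexedFamily) : Prop :=
  ∃ (M : Machine) (T : Teacher) (p : Polynomial ℕ), ∀ A, 𝓕.Mem A → ∀ f, IsEnum f A →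
    ∃ h, 𝓕.F h = A ∧ M.PSDIdentifies (fun m => T.t (str f m)) h (p.eval (𝓕.mi A))

/-- `𝓕` is PSD[O]-learnable. -/
def PSDO (𝓕 : IndexedFamily) : Prop :=
  ∃ (M : OMachine) (p : Polynomial ℕ), ∀ A, 𝓕.Mem A → ∀ f, IsEnum f A →
    ∃ h, 𝓕.F h = A ∧ M.PSDIdentifies A (str f) h (p.eval (𝓕.mi A))

/-- `𝓕` is PSD[T,O]-learnable. -/
def PSDTO (𝓕 : IndexedFamily) : Prop :=
  ∃ (M : OMachine) (T : OTeacher) (p : Polynomial ℕ),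
    ∀ A, 𝓕.Mem A → ∀ f, IsEnum f A →
      ∃ h, 𝓕.F h = A ∧ ∃ hist : ℕ → List Bool, hist 0 = [] ∧
        ∃ n, M.TOSettles T A f hist h n ∧
          (T.t (str f n) (hist n)).toFinset.card < p.eval (𝓕.mi A) ∧
          (hist (n + 1)).length ≤ p.eval (𝓕.mi A)

/-! ### Polynomial mind-changes (PMC) -/

/-- The set of positions at which the hypothesis stream `g` changes its mind. -/
def MindChanges (g : ℕ → ℕ) : Set ℕ := {i | g i ≠ g (i + 1)}

/-- The hypothesis stream `g` changes its mind at most `B` times, and the only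
hypothesis appearing infinitely often in it is an index of `A` in `𝓕`. -/
def PMCCriterion (𝓕 : IndexedFamily) (A : Set ℕ) (g : ℕ → ℕ) (B : ℕ) : Prop :=
  (MindChanges g).Finite ∧ (MindChanges g).ncard ≤ B ∧
    ∀ h, {i | g i = h}.Infinite → 𝓕.F h = A

/-- `𝓕` is PMC-learnable. -/
def PMC (𝓕 : IndexedFamily) : Prop :=
  ∃ (M : Machine) (p : Polynomial ℕ), ∀ A, 𝓕.Mem A → ∀ f, IsEnum f A →
    ∃ g : ℕ → ℕ, (∀ m, M.eval (str f m) = Part.some (g m)) ∧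
      PMCCriterion 𝓕 A g (p.eval (𝓕.mi A))

/-- `𝓕` is PMC[T]-learnable. -/
def PMCT (𝓕 : IndexedFamily) : Prop :=
  ∃ (M : Machine) (T : Teacher) (p : Polynomial ℕ), ∀ A, 𝓕.Mem A → ∀ f, IsEnum f A →
    ∃ g : ℕ → ℕ, (∀ m, M.eval (T.t (str f m)) = Part.some (g m)) ∧
      PMCCriterion 𝓕 A g (p.eval (𝓕.mi A))

/-- `𝓕` is PMC[O]-learnable. -/
def PMCO (𝓕 : IndexedFamily) : Prop :=
  ∃ (M : OMachine) (p : Polynomial ℕ), ∀ A, 𝓕.Mem A → ∀ f, IsEnum f A →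
    ∃ g : ℕ → ℕ,
      (∀ m, ∃ ans, M.Out A (str f m) (g m) ans ∧ ans.length ≤ p.eval (𝓕.mi A)) ∧
      PMCCriterion 𝓕 A g (p.eval (𝓕.mi A))

/-- `𝓕` is PMC[T,O]-learnable. -/
def PMCTO (𝓕 : IndexedFamily) : Prop :=
  ∃ (M : OMachine) (T : OTeacher) (p : Polynomial ℕ),
    ∀ A, 𝓕.Mem A → ∀ f, IsEnum f A →
      ∃ hist : ℕ → List Bool, hist 0 = [] ∧
        ∃ g : ℕ → ℕ,
          (∀ m, M.Out A (T.t (str f m) (hist m)) (g m) (hist (m + 1)) ∧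
            (hist (m + 1)).length ≤ p.eval (𝓕.mi A)) ∧
          PMCCriterion 𝓕 A g (p.eval (𝓕.mi A))

/-! ### Polynomial size characteristic sample (PCS) -/

/-- `𝓕` is PCS-learnable: there are a machine, a polynomial bound and an
assignment of a characteristic sample to each member of `𝓕`. -/
def PCS (𝓕 : IndexedFamily) : Prop :=
  ∃ (M : Machine) (p : Polynomial ℕ) (S : Set ℕ → Finset ℕ),
    ∀ A, 𝓕.Mem A → ↑(S A) ⊆ A ∧ (S A).card < p.eval (𝓕.mi A) ∧
      ∃ e, 𝓕.F e = A ∧ ∀ f, IsEnum f A → ∀ n, (∀ x ∈ S A, x ∈ str f n) →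
        M.eval (str f n) = Part.some e

/-- `𝓕` is PCS[O]-learnable. -/
def PCSO (𝓕 : IndexedFamily) : Prop :=
  ∃ (M : OMachine) (p : Polynomial ℕ) (S : Set ℕ → Finset ℕ),
    ∀ A, 𝓕.Mem A → ↑(S A) ⊆ A ∧ (S A).card < p.eval (𝓕.mi A) ∧
      ∃ e, 𝓕.F e = A ∧ ∀ f, IsEnum f A → ∀ n, (∀ x ∈ S A, x ∈ str f n) →
        ∃ ans, M.Out A (str f n) e ans ∧ ans.length ≤ p.eval (𝓕.mi A)

/-- `𝓕` is PCS[T]-learnable: the characteristic sample must eventually appear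
in the teacher's output stream, after which the learner locks onto a correct
index. -/
def PCST (𝓕 : IndexedFamily) : Prop :=
  ∃ (M : Machine) (T : Teacher) (p : Polynomial ℕ) (S : Set ℕ → Finset ℕ),
    ∀ A, 𝓕.Mem A → ↑(S A) ⊆ A ∧ (S A).card < p.eval (𝓕.mi A) ∧
      ∃ e, 𝓕.F e = A ∧ ∀ f, IsEnum f A →
        (∃ n, ∀ x ∈ S A, x ∈ T.t (str f n)) ∧
        ∀ n, (∀ x ∈ S A, x ∈ T.t (str f n)) → M.eval (T.t (str f n)) = Part.some e

/-- `𝓕` is PCS[T,O]-learnable. -/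
def PCSTO (𝓕 : IndexedFamily) : Prop :=
  ∃ (M : OMachine) (T : OTeacher) (p : Polynomial ℕ) (S : Set ℕ → Finset ℕ),
    ∀ A, 𝓕.Mem A → ↑(S A) ⊆ A ∧ (S A).card < p.eval (𝓕.mi A) ∧
      ∃ e, 𝓕.F e = A ∧ ∀ f, IsEnum f A →
        ∃ hist : ℕ → List Bool, hist 0 = [] ∧
          (∃ n, ∀ x ∈ S A, x ∈ T.t (str f n) (hist n)) ∧
          ∀ n, (∀ x ∈ S A, x ∈ T.t (str f n) (hist n)) →
            M.Out A (T.t (str f n) (hist n)) e (hist (n + 1)) ∧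
            (hist (n + 1)).length ≤ p.eval (𝓕.mi A)


/-- The computable bijection `ℕ → ℤ` with `signedInt (2n) = n` and
`signedInt (2n+1) = -(n+1)`. -/
def signedInt (n : ℕ) : ℤ := if n % 2 = 0 then (n / 2 : ℤ) else -((n / 2 : ℤ) + 1)

/-- The fixed polynomial-time coding of quadruples. -/
def code4 (x c o i : ℕ) : ℕ := Nat.pair x (Nat.pair c (Nat.pair o i))

/-- `D` is a descriptor on the `i`-th column describing the natural number `n`:
`D = {⟨x, c x, 1, i⟩ : x ∈ X}` for a finite set `X` and completion indices `c`,
the completion indices sum to `0` (under `signedInt`), no nonempty proper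
subset of them sums to `0`, and `Σ_{x ∈ X} signedInt x = n ≥ 0`. -/
def Describes (i : ℕ) (D : Set ℕ) (n : ℕ) : Prop :=
  ∃ (X : Finset ℕ) (c : ℕ → ℕ),
    D = {m | ∃ x ∈ X, m = code4 x (c x) 1 i} ∧
    (∑ x ∈ X, signedInt (c x)) = 0 ∧
    (∀ X' ⊂ X, X'.Nonempty → (∑ x ∈ X', signedInt (c x)) ≠ 0) ∧
    0 ≤ (∑ x ∈ X, signedInt x) ∧
    (∑ x ∈ X, signedInt x) = (n : ℤ)

/-!
With `T = tower (n / 2) = 2 ^ 2 ^ (2 * (n / 2) + 1)`, the `n`-th member is the descriptor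
`{core (n / 2), closing n}` in which the core contributes `-T` and the closing element `T + n`.
A teacher forwards the first element of completion index `1`, the closing element, from which
the learner decodes `n`. An oracle learner cannot separate `2 * m` from `2 * m + 1` on texts
that repeat their common core for `B = 2 ^ (2 * m + 1)` steps: within a polynomial time bound
below `B` it has read only the core and can query only numbers below `2 ^ B = T`, where the two
targets agree, so it must conjecture the same index for both.
-/

open Filter Polynomial

theorem _root_.Polynomial.eventually_eval_lt_two_pow (p : ℕ[X]) :
    ∀ᶠ n : ℕ in atTop, p.eval n < 2 ^ n := by
  have hO : (fun n : ℕ => ((p.eval n : ℕ) : ℝ)) =O[atTop]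
      fun n : ℕ => (n : ℝ) ^ p.natDegree := by
    have h := (isBigO_atTop_of_degree_le (p.map (Nat.castRingHom ℝ)) (X ^ p.natDegree)
      (by simpa using degree_map_le.trans degree_le_natDegree)).comp_tendsto
        tendsto_natCast_atTop_atTop
    simpa [Function.comp_def, eval_map] using h
  have ho := hO.trans_isLittleO (isLittleO_pow_const_const_pow_of_one_lt (R := ℝ) _ one_lt_two)
  filter_upwards [ho.def (c := 1 / 2) (by norm_num)] with n hn
  have h2 : (0 : ℝ) < 2 ^ n := by positivity
  rw [Real.norm_natCast, Real.norm_of_nonneg h2.le] at hn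
  exact_mod_cast (hn.trans_lt (by linarith) : ((p.eval n : ℕ) : ℝ) < 2 ^ n)

section Texts

variable {f g : ℕ → ℕ} {A : Set ℕ}

@[simp]
theorem length_str (f : ℕ → ℕ) (n : ℕ) : (str f n).length = n := by
  simp [str]

theorem mem_str {j n : ℕ} (h : j < n) : f j ∈ str f n :=
  List.mem_map.2 ⟨j, List.mem_range.2 h, rfl⟩

theorem IsEnum.mem_of_mem_str (hf : IsEnum f A) {n x : ℕ} (hx : x ∈ str f n) : x ∈ A := by
  obtain ⟨j, -, rfl⟩ := List.mem_map.1 hx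
  exact hf ▸ Set.mem_range_self j

theorem str_congr {n : ℕ} (h : ∀ i < n, f i = g i) : str f n = str g n :=
  List.map_congr_left fun i hi => h i (List.mem_range.1 hi)

theorem isEnum_ite {N : ℕ} (hN : 0 < N) (x y : ℕ) :
    IsEnum (fun i => if i < N then x else y) {x, y} := by
  ext z
  simp only [Set.mem_range, Set.mem_insert_iff, Set.mem_singleton_iff]
  constructor
  · rintro ⟨i, rfl⟩
    split_ifs <;> simp
  · rintro (rfl | rfl)
    exacts [⟨0, if_pos hN⟩, ⟨N, if_neg (lt_irrefl N)⟩]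

end Texts

theorem IndexedFamily.mi_F_of_injective {𝓕 : IndexedFamily} (h : Function.Injective 𝓕.F)
    (n : ℕ) : 𝓕.mi (𝓕.F n) = n := by
  have hn : {k | 𝓕.F k = 𝓕.F n} = {n} := Set.ext fun _ => h.eq_iff
  simp [IndexedFamily.mi, hn]

section MarkedTeacher

variable {marked : ℕ → Bool}

def firstMarked (marked : ℕ → Bool) (σ : List ℕ) : List ℕ := (σ.filter marked).take 1

theorem firstMarked_eq_singleton {σ : List ℕ} (h : ∃ e ∈ σ, marked e) :
    ∃ e ∈ σ, marked e ∧ firstMarked marked σ = [e] := by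
  have hne : σ.filter marked ≠ [] := by simpa [List.filter_eq_nil_iff] using h
  obtain ⟨e, l, hl⟩ := List.exists_cons_of_ne_nil hne
  have he : e ∈ σ.filter marked := by simp [hl]
  rw [List.mem_filter] at he
  exact ⟨e, he.1, he.2, by simp [firstMarked, hl]⟩

def markedTeacher (hmarked : Primrec marked) : Teacher where
  t := firstMarked marked
  computable :=
    have hfilter : Primrec (List.filter marked) :=
      (Primrec.listFilter (p := fun e => marked e = true)
        (hmarked.of_eq fun e => by simp).primrecPred).of_eq fun σ => by simp
    (Primrec.list_take.comp (Primrec.const 1) hfilter).to_comp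
  mono σ τ h := by
    rw [firstMarked, firstMarked, List.prefix_take_iff]
    exact ⟨(List.take_prefix _ _).trans (h.filter marked), List.length_take_le _ _⟩
  content_sub σ x h := (List.mem_filter.1 (List.mem_of_mem_take h)).1

end MarkedTeacher

section HeadDecoder

variable (decode : ℕ → ℕ)

def headDecode (σ : List ℕ) : ℕ := (σ.head?.map decode).getD 0

def headDecoder (hdecode : Computable decode) : Machine where
  eval σ := Part.some (headDecode decode σ)
  partrec := (Computable.option_getD (Computable.option_map Primrec.list_head?.to_comp
    (hdecode.comp Computable.snd).to₂) (Computable.const 0)).partrec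
  time σ := Part.some (σ.length + Nat.size (headDecode decode σ))
  time_dom σ := by simp
  length_le_time σ t ht := by
    rw [Part.mem_some_iff] at ht
    omega
  size_le_time σ t h ht hh := by
    rw [Part.mem_some_iff] at ht hh
    subst ht hh
    omega
  time_mono σ τ s t h hs ht := by
    rw [Part.mem_some_iff] at hs ht
    subst hs ht
    rcases σ with _ | ⟨a, l⟩
    · simp [headDecode]
    · obtain ⟨ρ, rfl⟩ := h
      simp [headDecode]

end HeadDecoder

theorem prtt_of_marked (𝓕 : IndexedFamily) (hinj : Function.Injective 𝓕.F)
    {marked : ℕ → Bool} (hmarked : Primrec marked) {decode : ℕ → ℕ} (hdecode : Computable decode)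
    (hF : ∀ n, (∃ e ∈ 𝓕.F n, marked e) ∧ ∀ e ∈ 𝓕.F n, marked e → decode e = n) : PRTT 𝓕 := by
  refine ⟨headDecoder decode hdecode, markedTeacher hmarked, X + C 2, ?_⟩
  rintro _ ⟨n, rfl⟩ f hf
  refine ⟨n, rfl, ?_⟩
  obtain ⟨e, he, hme⟩ := (hF n).1
  obtain ⟨j, rfl⟩ : e ∈ Set.range f := hf ▸ he
  have hteach : ∀ s, j < s → ∃ e', firstMarked marked (str f s) = [e'] ∧ decode e' = n := by
    intro s hs
    obtain ⟨e', he', hme', heq⟩ := firstMarked_eq_singleton ⟨f j, mem_str hs, hme⟩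
    exact ⟨e', heq, (hF n).2 e' (hf.mem_of_mem_str he') hme'⟩
  have hout : ∀ s, j < s → headDecode decode (firstMarked marked (str f s)) = n := by
    intro s hs
    obtain ⟨e', heq, hdec⟩ := hteach s hs
    simp [heq, headDecode, hdec]
  refine ⟨j + 1, fun s hs => congrArg Part.some (hout s hs), 1 + Nat.size n, ?_, ?_⟩
  · obtain ⟨e', heq, -⟩ := hteach (j + 1) j.lt_succ_self
    show _ ∈ Part.some ((firstMarked marked (str f (j + 1))).length +
      Nat.size (headDecode decode (firstMarked marked (str f (j + 1)))))
    rw [hout (j + 1) j.lt_succ_self, heq]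
    simp [add_comm]
  · rw [IndexedFamily.mi_F_of_injective hinj]
    have : Nat.size n ≤ n := Nat.size_le.2 n.lt_two_pow_self
    simp only [eval_add, eval_X, eval_C]
    omega

namespace OMachine

variable {M : OMachine} {A A' : Set ℕ} {σ : List ℕ}

theorem query_lt_two_pow {x : List ℕ × List Bool} {q t : ℕ} (ht : t ∈ M.time x)
    (hq : 2 * q ∈ M.step x) : q < 2 ^ t := by
  have := Nat.size_le.1 (M.size_le_time ht hq)
  omega

theorem Reach.exists_query_of_prefix {a b : List Bool} (ha : M.Reach A σ a) (hb : b <+: a)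
    (hne : b ≠ a) : ∃ q, 2 * q ∈ M.step (σ, b) ∧ b ++ [decide (q ∈ A)] <+: a := by
  induction ha with
  | nil => exact absurd (List.prefix_nil.1 hb) hne
  | @query ans q _ hq ih =>
    rcases List.prefix_concat_iff.1 hb with h | h
    · exact absurd h hne
    · by_cases hb' : b = ans
      · subst hb'
        exact ⟨q, hq, List.prefix_refl _⟩
      · obtain ⟨q', hq', hpre⟩ := ih h hb'
        exact ⟨q', hq', hpre.trans (List.prefix_append _ _)⟩

theorem Reach.prefix_of_halts {a b : List Bool} {h : ℕ} (ha : M.Reach A σ a)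
    (hhalt : 2 * h + 1 ∈ M.step (σ, a)) (hb : M.Reach A σ b) : b <+: a := by
  induction hb with
  | nil => exact List.nil_prefix
  | @query b q _ hq ih =>
    have hne : b ≠ a := by
      rintro rfl
      have := Part.mem_unique hq hhalt
      omega
    obtain ⟨q', hq', hpre⟩ := ha.exists_query_of_prefix ih hne
    obtain rfl : q' = q := by
      have := Part.mem_unique hq' hq
      omega
    exact hpre

theorem Out.hyp_eq {x y : ℕ} {a b : List Bool} (hx : M.Out A σ x a) (hy : M.Out A σ y b) :
    x = y := by
  have hab := hy.1.prefix_of_halts hy.2 hx.1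
  have hba := hx.1.prefix_of_halts hx.2 hy.1
  obtain rfl := hab.eq_of_length (hab.length_le.antisymm hba.length_le)
  have := Part.mem_unique hx.2 hy.2
  omega

theorem Reach.of_agree {ans b : List Bool} {t : ℕ} (ht : t ∈ M.time (σ, ans))
    (hA : ∀ q < 2 ^ t, q ∈ A ↔ q ∈ A') (hb : M.Reach A' σ b) (hpre : b <+: ans) :
    M.Reach A σ b := by
  induction hb with
  | nil => exact .nil
  | @query b q _ hq ih =>
    have hpre' : b <+: ans := (List.prefix_append _ _).trans hpre
    obtain ⟨t', ht'⟩ := Part.dom_iff_mem.1 ((M.time_dom _).2 (Part.dom_iff_mem.2 ⟨_, hq⟩))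
    have hqt : q < 2 ^ t := (query_lt_two_pow ht' hq).trans_le
      (Nat.pow_le_pow_right two_pos (M.time_mono (List.prefix_refl σ) hpre' ht' ht))
    rw [← decide_eq_decide.2 (hA q hqt)]
    exact .query (ih hpre') hq

theorem Out.of_agree {h t : ℕ} {ans : List Bool} (hout : M.Out A' σ h ans)
    (ht : t ∈ M.time (σ, ans)) (hA : ∀ q < 2 ^ t, q ∈ A ↔ q ∈ A') : M.Out A σ h ans :=
  ⟨hout.1.of_agree ht hA (List.prefix_refl _), hout.2⟩

theorem Settles.hyp_eq_of_agree {f₁ f₂ : ℕ → ℕ} {h₁ h₂ s₁ s₂ t : ℕ} {ans : List Bool}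
    (hset : M.Settles A (str f₁) h₁ s₁) (hs : s₁ ≤ s₂) (hout : M.Out A' (str f₂ s₂) h₂ ans)
    (ht : t ∈ M.time (str f₂ s₂, ans)) (hA : ∀ q < 2 ^ t, q ∈ A ↔ q ∈ A')
    (hf : ∀ i < t, f₁ i = f₂ i) : h₁ = h₂ := by
  have hst : s₂ ≤ t := by simpa using M.length_le_time ht
  obtain ⟨ans₁, hout₁⟩ := hset s₂ hs
  rw [str_congr fun i hi => hf i (hi.trans_le hst)] at hout₁
  exact hout₁.hyp_eq (hout.of_agree ht hA)

theorem PRTIdentifies.mono {I : ℕ → List ℕ} {h B B' : ℕ} (hI : M.PRTIdentifies A I h B)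
    (hB : B ≤ B') : M.PRTIdentifies A I h B' := by
  obtain ⟨n, hset, ans, t, hout, ht, htB⟩ := hI
  exact ⟨n, hset, ans, t, hout, ht, htB.trans_le hB⟩

theorem PRTIdentifies.hyp_eq_of_agree {f₁ f₂ : ℕ → ℕ} {h₁ h₂ B : ℕ}
    (hA : ∀ q < 2 ^ B, q ∈ A ↔ q ∈ A') (hf : ∀ i < B, f₁ i = f₂ i)
    (hI₁ : M.PRTIdentifies A (str f₁) h₁ B) (hI₂ : M.PRTIdentifies A' (str f₂) h₂ B) :
    h₁ = h₂ := by
  obtain ⟨s₁, hset₁, ans₁, t₁, hout₁, ht₁, htB₁⟩ := hI₁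
  obtain ⟨s₂, hset₂, ans₂, t₂, hout₂, ht₂, htB₂⟩ := hI₂
  have hA' {t} (htB : t < B) (q) (hq : q < 2 ^ t) : q ∈ A ↔ q ∈ A' :=
    hA q (hq.trans (Nat.pow_lt_pow_right one_lt_two htB))
  rcases le_total s₁ s₂ with hs | hs
  · exact hset₁.hyp_eq_of_agree hs hout₂ ht₂ (hA' htB₂) fun i hi => hf i (hi.trans htB₂)
  · exact (hset₂.hyp_eq_of_agree hs hout₁ ht₁ (fun q hq => (hA' htB₁ q hq).symm)
      fun i hi => (hf i (hi.trans htB₁)).symm).symm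

end OMachine

theorem describes_pair {i a b ca cb n : ℕ} (hab : a ≠ b)
    (hc : signedInt ca + signedInt cb = 0) (hcb : signedInt cb ≠ 0)
    (hsum : signedInt a + signedInt b = n) :
    Describes i {code4 a ca 1 i, code4 b cb 1 i} n := by
  refine ⟨{a, b}, fun x => if x = a then ca else cb, ?_, ?_, ?_, ?_, ?_⟩
  · ext m
    simp [hab, eq_comm]
  · simp [Finset.sum_pair hab, hab.symm, hc]
  · intro X' hX' hne
    obtain rfl | rfl : X' = {a} ∨ X' = {b} := by grind
    · simp
      omega
    · simpa [hab.symm] using hcb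
  · rw [Finset.sum_pair hab, hsum]
    positivity
  · rw [Finset.sum_pair hab, hsum]

namespace MSD

def tower (m : ℕ) : ℕ := 2 ^ 2 ^ (2 * m + 1)

def core (m : ℕ) : ℕ := code4 (2 * tower m - 1) 2 1 0

def closing (n : ℕ) : ℕ := code4 (2 * (tower (n / 2) + n)) 1 1 0

def msd (n : ℕ) : Set ℕ := {core (n / 2), closing n}

theorem tower_pos (m : ℕ) : 0 < tower m :=
  Nat.two_pow_pos _

theorem tower_monotone : Monotone tower := fun _ _ h =>
  Nat.pow_le_pow_right two_pos (Nat.pow_le_pow_right two_pos (by omega))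

theorem signedInt_two_mul (k : ℕ) : signedInt (2 * k) = k := by
  simp [signedInt]

theorem signedInt_two_mul_sub_one {k : ℕ} (hk : 0 < k) : signedInt (2 * k - 1) = -k := by
  simp [signedInt]
  omega

theorem describes_msd (n : ℕ) : Describes 0 (msd n) n := by
  have hT := tower_pos (n / 2)
  refine describes_pair (by omega) (by decide) (by decide) ?_
  rw [signedInt_two_mul_sub_one hT, signedInt_two_mul]
  push_cast
  ring

theorem closing_injective : Function.Injective closing := by
  have hmono : StrictMono fun n => tower (n / 2) + n := fun a b h =>
    add_lt_add_of_le_of_lt (tower_monotone (Nat.div_le_div_right h.le)) h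
  intro a b h
  simp only [closing, code4, Nat.pair_eq_pair] at h
  exact hmono.injective (by omega)

theorem tower_le_closing (n : ℕ) : tower (n / 2) ≤ closing n :=
  le_trans (by omega) (Nat.left_le_pair _ _)

def completionIndex (e : ℕ) : ℕ := (Nat.unpair (Nat.unpair e).2).1

@[simp]
theorem completionIndex_code4 (x c o i : ℕ) : completionIndex (code4 x c o i) = c := by
  simp [completionIndex, code4]

theorem msd_injective : Function.Injective msd := by
  intro a b h
  have hmem : closing a ∈ msd b := h ▸ Or.inr rfl
  rcases hmem with hcore | hclosing
  · simpa [closing, core] using congrArg completionIndex hcore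
  · exact closing_injective hclosing

theorem mem_msd_iff_of_lt_tower {n q : ℕ} (hq : q < tower (n / 2)) :
    q ∈ msd n ↔ q = core (n / 2) := by
  have : q ≠ closing n := (hq.trans_le (tower_le_closing n)).ne
  simp [msd, this]

def decodeClosing (e : ℕ) : ℕ := Nat.findGreatest (fun k => closing k = e) e

theorem decodeClosing_closing (n : ℕ) : decodeClosing (closing n) = n :=
  closing_injective (Nat.findGreatest_spec (P := fun k => closing k = closing n)
    (le_trans (by omega) (Nat.left_le_pair _ _)) rfl)

theorem primrec_tower : Primrec tower :=
  have hpow : Primrec₂ ((· ^ ·) : ℕ → ℕ → ℕ) := Primrec₂.unpaired'.1 Nat.Primrec.pow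
  hpow.comp (Primrec.const 2) (hpow.comp (Primrec.const 2)
    (Primrec.nat_add.comp (Primrec.nat_mul.comp (Primrec.const 2) Primrec.id) (Primrec.const 1)))

theorem primrec_code4 {x c : ℕ → ℕ} (hx : Primrec x) (hc : Primrec c) (o i : ℕ) :
    Primrec fun n => code4 (x n) (c n) o i :=
  Primrec₂.natPair.comp hx (Primrec₂.natPair.comp hc (Primrec.const (Nat.pair o i)))

theorem primrec_core : Primrec core :=
  primrec_code4 (Primrec.nat_sub.comp (Primrec.nat_mul.comp (Primrec.const 2) primrec_tower)
    (Primrec.const 1)) (Primrec.const 2) 1 0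

theorem primrec_closing : Primrec closing :=
  primrec_code4 (Primrec.nat_mul.comp (Primrec.const 2) (Primrec.nat_add.comp
    (primrec_tower.comp (Primrec.nat_div.comp Primrec.id (Primrec.const 2))) Primrec.id))
    (Primrec.const 1) 1 0

theorem primrec_completionIndex : Primrec completionIndex :=
  Primrec.fst.comp (Primrec.unpair.comp (Primrec.snd.comp Primrec.unpair))

theorem primrec_decodeClosing : Primrec decodeClosing :=
  Primrec.nat_findGreatest Primrec.id
    (Primrec.eq.comp (primrec_closing.comp Primrec.snd) Primrec.fst)

theorem computablePred_mem_msd : ComputablePred fun p : ℕ × ℕ => p.1 ∈ msd p.2 :=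
  ((Primrec.eq.comp Primrec.fst ((primrec_core.comp (Primrec.nat_div.comp Primrec.id
    (Primrec.const 2))).comp Primrec.snd)).or
    (Primrec.eq.comp Primrec.fst (primrec_closing.comp Primrec.snd))).computablePred

def msdFamily : IndexedFamily where
  F := msd
  nonempty n := ⟨closing n, Or.inr rfl⟩
  uce := computablePred_mem_msd.to_re

theorem prtt_msdFamily : PRTT msdFamily := by
  refine prtt_of_marked msdFamily msd_injective
    (Primrec.beq.comp primrec_completionIndex (Primrec.const 1))
    primrec_decodeClosing.to_comp fun n => ⟨⟨closing n, Or.inr rfl, by simp [closing]⟩, ?_⟩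
  rintro e (rfl | rfl) he
  · simp [core] at he
  · exact decodeClosing_closing n

theorem not_prto_msdFamily : ¬ PRTO msdFamily := by
  rintro ⟨M, p, hM⟩
  obtain ⟨m, hm⟩ := eventually_atTop.1 p.eventually_eval_lt_two_pow
  set B := 2 ^ (2 * m + 1)
  have hlearn : ∀ n, n / 2 = m →
      M.PRTIdentifies (msd n) (str fun i => if i < B then core m else closing n) n B := by
    intro n hn
    have hf : IsEnum (fun i => if i < B then core m else closing n) (msd n) := by
      rw [msd, hn]
      exact isEnum_ite (Nat.two_pow_pos _) _ _
    obtain ⟨h, hh, hid⟩ := hM (msd n) ⟨n, rfl⟩ _ hf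
    obtain rfl : n = h := (msd_injective hh).symm
    refine hid.mono ?_
    rw [show msdFamily.mi (msd n) = n from IndexedFamily.mi_F_of_injective msd_injective n]
    exact ((hm n (by omega)).trans_le (Nat.pow_le_pow_right two_pos (by omega))).le
  have hagree : ∀ q < 2 ^ B, q ∈ msd (2 * m) ↔ q ∈ msd (2 * m + 1) := by
    intro q hq
    have h₀ : (2 * m) / 2 = m := by omega
    have h₁ : (2 * m + 1) / 2 = m := by omega
    rw [mem_msd_iff_of_lt_tower (by rwa [h₀]), mem_msd_iff_of_lt_tower (by rwa [h₁]), h₀, h₁]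
  have := (hlearn (2 * m) (by omega)).hyp_eq_of_agree hagree (fun i hi => by simp [hi])
    (hlearn (2 * m + 1) (by omega))
  omega

end MSD

/-- There is an indexed family (the marked self-describing
sets `𝓜𝓢𝓓`), whose `n`-th member is a descriptor on the `0`-th column
describing `n`, which is PRT[T]-learnable but not PRT[O]-learnable. -/
theorem stmt2 :
    ∃ 𝓕 : IndexedFamily, (∀ n, Describes 0 (𝓕.F n) n) ∧ PRTT 𝓕 ∧ ¬ PRTO 𝓕 :=
  ⟨MSD.msdFamily, MSD.describes_msd, MSD.prtt_msdFamily, MSD.not_prto_msdFamily⟩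

end TeachLearn
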